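/- arXiv:2209.15230 — 3 statements merged into one kernel-verified Lean document; each statement's English description precedes it below -/
import Mathlib

section
/- If v and w are pure profiles of a finite game and there is a directed path from v to w in the response graph, then under the replicator flow there is a pseudo-orbit from v to w (viewing pure profiles as vertices of the product of simplices). -/
open Finset

/-- Insert strategy `s` for player `p` into the antiprofile `q`. -/
def insertStrat {N : ℕ} {S : Fin N → Type*} (p : Fin N) (s : S p)
    (q : ∀ j : {j : Fin N // j ≠ p}, S j) : ∀ j, S j :=
  fun j => if h : j = p then cast (congrArg S h).symm s else q ⟨j, h⟩

/-- Expected utility to player `p` of playing pure strategy `s` against the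
mixed antiprofile of `x`. -/
def Upure {N : ℕ} {S : Fin N → Type*} [∀ i, Fintype (S i)]
    (u : (∀ j, S j) → Fin N → ℝ) (x : ∀ j, S j → ℝ) (p : Fin N) (s : S p) : ℝ :=
  ∑ q : (∀ j : {j : Fin N // j ≠ p}, S j),
    (∏ j : {j : Fin N // j ≠ p}, x j (q j)) * u (insertStrat p s q) p

/-- The replicator vector field. -/
def replicator {N : ℕ} {S : Fin N → Type*} [∀ i, Fintype (S i)]
    (u : (∀ j, S j) → Fin N → ℝ) (x : ∀ j, S j → ℝ) (p : Fin N) (s : S p) : ℝ :=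
  x p s * (Upure u x p s - ∑ t : S p, x p t * Upure u x p t)

/-- `x` is a mixed profile. -/
def MixedProfile {N : ℕ} {S : Fin N → Type*} [∀ i, Fintype (S i)]
    (x : ∀ j, S j → ℝ) : Prop :=
  (∀ i (s : S i), 0 ≤ x i s) ∧ ∀ i, ∑ s : S i, x i s = 1

/-- The pure profile `v` viewed as a vertex of the product of simplices. -/
def vertex {N : ℕ} {S : Fin N → Type*} [∀ i, DecidableEq (S i)]
    (v : ∀ j, S j) : ∀ j, S j → ℝ :=
  fun j s => if s = v j then 1 else 0

/-- Two profiles are `i`-comparable if they differ only in player `i`'s strategy. -/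
def IComparable {N : ℕ} {S : Fin N → Type*} (i : Fin N) (p q : ∀ j, S j) : Prop :=
  p i ≠ q i ∧ ∀ j, j ≠ i → p j = q j

/-- Arc of the response graph: `p → q` when `p, q` are `i`-comparable and
`u_i(p) ≤ u_i(q)`. -/
def ResponseArc {N : ℕ} {S : Fin N → Type*}
    (u : (∀ j, S j) → Fin N → ℝ) (p q : ∀ j, S j) : Prop :=
  ∃ i, IComparable i p q ∧ u p i ≤ u q i

/-- An `(ε, T)`-chain from `x` to `y` under `φ`. -/
def IsETChain {N : ℕ} {S : Fin N → Type*} [∀ i, Fintype (S i)]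
    (φ : (∀ j, S j → ℝ) → ℝ → (∀ j, S j → ℝ)) (ε T : ℝ)
    (x y : ∀ j, S j → ℝ) : Prop :=
  ∃ (n : ℕ) (z : ℕ → (∀ j, S j → ℝ)) (t : ℕ → ℝ), 1 ≤ n ∧ z 0 = x ∧ z n = y ∧
    ∀ i < n, T ≤ t i ∧ dist (φ (z i) (t i)) (z (i + 1)) < ε

/-- A pseudo-orbit from `x` to `y`. -/
def Pseudo {N : ℕ} {S : Fin N → Type*} [∀ i, Fintype (S i)]
    (φ : (∀ j, S j → ℝ) → ℝ → (∀ j, S j → ℝ)) (x y : ∀ j, S j → ℝ) : Prop :=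
  ∀ ε > (0 : ℝ), ∀ T > (0 : ℝ), IsETChain φ ε T x y

/-! A coordinate `x p s` of a solution of the replicator equation satisfies `|ẋ| ≤ K x`, so by
Grönwall a strategy that is not played initially is never played: faces of the product of
simplices are forward invariant and vertices are rest points. Along an arc `p → q` of the response
graph, where `p` and `q` differ only in player `i`'s strategy, the edge from `vertex p` to
`vertex q` is therefore invariant, and the weight `m` of `q i` on it obeys the logistic equation
`ṁ = (u q i - u p i) m (1 - m)`, so it never decreases. Alternating flow along the edge for time
`T` with jumps of size `< ε` towards `vertex q` gives an `(ε, T)`-chain reaching `vertex q` after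
about `1 / ε` jumps, and the chains along the arcs of a path concatenate. -/

lemma abs_sum_mul_le_of_sum_eq_one {ι : Type*} [Fintype ι] {w a : ι → ℝ} {M : ℝ}
    (hw : ∀ k, 0 ≤ w k) (hw1 : ∑ k, w k = 1) (ha : ∀ k, |a k| ≤ M) :
    |∑ k, w k * a k| ≤ M :=
  calc |∑ k, w k * a k| ≤ ∑ k, |w k * a k| := abs_sum_le_sum_abs _ _
    _ ≤ ∑ k, w k * M := sum_le_sum fun k _ => by
        rw [abs_mul, abs_of_nonneg (hw k)]
        exact mul_le_mul_of_nonneg_left (ha k) (hw k)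
    _ = M := by rw [← sum_mul, hw1, one_mul]

lemma sum_pi_prod_eq_one {ι : Type*} [Fintype ι] [DecidableEq ι] {α : ι → Type*}
    [∀ j, Fintype (α j)] {x : ∀ j, α j → ℝ} (hx : ∀ j, ∑ s, x j s = 1) :
    ∑ q : ∀ j, α j, ∏ j, x j (q j) = 1 := by
  rw [← Fintype.prod_sum]
  simp [hx]

section Game

variable {N : ℕ} {S : Fin N → Type*} [∀ i, Fintype (S i)]

lemma MixedProfile.le_one {x : ∀ j, S j → ℝ} (hx : MixedProfile x) (j : Fin N) (s : S j) :
    x j s ≤ 1 :=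
  hx.2 j ▸ single_le_sum (fun s' _ => hx.1 j s') (mem_univ s)

lemma MixedProfile.lineMap {x y : ∀ j, S j → ℝ} (hx : MixedProfile x) (hy : MixedProfile y)
    {m : ℝ} (hm0 : 0 ≤ m) (hm1 : m ≤ 1) : MixedProfile (AffineMap.lineMap x y m) := by
  refine ⟨fun j s => ?_, fun j => ?_⟩
  · have := hx.1 j s
    have := hy.1 j s
    simp only [AffineMap.lineMap_apply_module, Pi.add_apply, Pi.smul_apply, smul_eq_mul]
    nlinarith
  · simp only [AffineMap.lineMap_apply_module, Pi.add_apply, Pi.smul_apply, smul_eq_mul,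
      sum_add_distrib, ← mul_sum, hx.2, hy.2]
    ring

variable {u : (∀ j, S j) → Fin N → ℝ} {x : ∀ j, S j → ℝ} {p : Fin N} {M : ℝ}

lemma abs_Upure_le (hx : MixedProfile x) (hM : ∀ q, |u q p| ≤ M) (s : S p) :
    |Upure u x p s| ≤ M := by
  classical
  exact abs_sum_mul_le_of_sum_eq_one (fun q => prod_nonneg fun j _ => hx.1 _ _)
    (sum_pi_prod_eq_one fun j => hx.2 j) fun q => hM _

lemma abs_replicator_le (hx : MixedProfile x) (hM : ∀ q, |u q p| ≤ M) (s : S p) :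
    |replicator u x p s| ≤ 2 * M * x p s := by
  rw [replicator, abs_mul, abs_of_nonneg (hx.1 p s), mul_comm]
  gcongr
  · exact hx.1 p s
  calc |Upure u x p s - ∑ t, x p t * Upure u x p t|
      ≤ |Upure u x p s| + |∑ t, x p t * Upure u x p t| := abs_sub _ _
    _ ≤ M + M := add_le_add (abs_Upure_le hx hM s)
        (abs_sum_mul_le_of_sum_eq_one (hx.1 p) (hx.2 p) (abs_Upure_le hx hM))
    _ = 2 * M := by ring

end Game

section Flow

variable {N : ℕ} {S : Fin N → Type*} [∀ i, Fintype (S i)]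

structure SolvesReplicator (u : (∀ j, S j) → Fin N → ℝ)
    (φ : (∀ j, S j → ℝ) → ℝ → (∀ j, S j → ℝ)) : Prop where
  apply_zero : ∀ x, φ x 0 = x
  mixedProfile : ∀ x, MixedProfile x → ∀ t : ℝ, MixedProfile (φ x t)
  hasDerivAt : ∀ x, MixedProfile x → ∀ (t : ℝ) (p : Fin N) (s : S p),
    HasDerivAt (fun τ => φ x τ p s) (replicator u (φ x t) p s) t

variable {u : (∀ j, S j) → Fin N → ℝ} {φ : (∀ j, S j → ℝ) → ℝ → (∀ j, S j → ℝ)}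
  {x : ∀ j, S j → ℝ}

theorem SolvesReplicator.apply_eq_zero (hφ : SolvesReplicator u φ) (hx : MixedProfile x)
    {p : Fin N} {s : S p} (hxs : x p s = 0) {t : ℝ} (ht : 0 ≤ t) : φ x t p s = 0 := by
  classical
  obtain ⟨M, hM⟩ := Finite.exists_le fun q : ∀ j, S j => |u q p|
  have hderiv τ := hφ.hasDerivAt x hx τ p s
  have := norm_le_gronwallBound_of_norm_deriv_right_le (δ := 0) (K := 2 * M) (ε := 0) (a := 0)
    (b := t)
    (fun τ _ => (hderiv τ).continuousAt.continuousWithinAt)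
    (fun τ _ => (hderiv τ).hasDerivWithinAt) (by simp [hφ.apply_zero, hxs])
    (fun τ _ => by
      have hy := hφ.mixedProfile x hx τ
      rw [Real.norm_eq_abs, Real.norm_eq_abs, abs_of_nonneg (hy.1 p s), add_zero]
      exact abs_replicator_le hy hM s)
    t ⟨ht, le_rfl⟩
  simpa [gronwallBound_ε0_δ0] using this

variable [∀ i, DecidableEq (S i)]

lemma vertex_mixedProfile (v : ∀ j, S j) : MixedProfile (vertex v) :=
  ⟨fun j s => by unfold vertex; split_ifs <;> norm_num, fun j => by simp [vertex]⟩

lemma MixedProfile.eq_vertex (hx : MixedProfile x) {v : ∀ j, S j}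
    (h : ∀ j s, s ≠ v j → x j s = 0) : x = vertex v := by
  funext j s
  by_cases hs : s = v j
  · subst hs
    rw [vertex, if_pos rfl, ← hx.2 j, Fintype.sum_eq_single _ (h j)]
  · rw [h j s hs, vertex, if_neg hs]

theorem SolvesReplicator.apply_vertex (hφ : SolvesReplicator u φ) (v : ∀ j, S j) {t : ℝ}
    (ht : 0 ≤ t) : φ (vertex v) t = vertex v :=
  (hφ.mixedProfile _ (vertex_mixedProfile v) t).eq_vertex fun _ _ hs =>
    hφ.apply_eq_zero (vertex_mixedProfile v) (by simp [vertex, hs]) ht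

end Flow

section Edge

open AffineMap

variable {N : ℕ} {S : Fin N → Type*} {i : Fin N} {p q : ∀ j, S j}

lemma insertStrat_eq_of_eq_off (hpq : ∀ j, j ≠ i → p j = q j) :
    insertStrat i (q i) (fun j => p j.1) = q := by
  funext j
  by_cases h : j = i
  · subst h
    simp [insertStrat]
  · simp [insertStrat, h, hpq j h]

variable [∀ i, DecidableEq (S i)]

lemma lineMap_vertex_apply (p q : ∀ j, S j) (m : ℝ) (j : Fin N) (s : S j) :
    lineMap (vertex p) (vertex q) m j s = (1 - m) * vertex p j s + m * vertex q j s := by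
  simp [lineMap_apply_module]

variable [∀ i, Fintype (S i)]

lemma dist_vertex_le_one (p q : ∀ j, S j) : dist (vertex p) (vertex q) ≤ 1 :=
  (dist_pi_le_iff zero_le_one).2 fun j => (dist_pi_le_iff zero_le_one).2 fun s => by
    simp only [vertex]
    split_ifs <;> norm_num

lemma dist_lineMap_vertex_le (p q : ∀ j, S j) (a b : ℝ) :
    dist (lineMap (vertex p) (vertex q) a) (lineMap (vertex p) (vertex q) b) ≤ |a - b| := by
  rw [dist_lineMap_lineMap, Real.dist_eq]
  exact mul_le_of_le_one_right (abs_nonneg _) (dist_vertex_le_one p q)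

lemma MixedProfile.eq_lineMap_vertex {x : ∀ j, S j → ℝ} (hx : MixedProfile x)
    (hcomp : IComparable i p q) (h : ∀ j s, s ≠ p j → s ≠ q j → x j s = 0) :
    x = AffineMap.lineMap (vertex p) (vertex q) (x i (q i)) := by
  obtain ⟨hne, hpq⟩ := hcomp
  funext j s
  rw [lineMap_vertex_apply]
  by_cases hj : j = i
  · subst hj
    have hsum : x j (p j) + x j (q j) = 1 := by
      rw [← hx.2 j, Fintype.sum_eq_add _ _ hne fun s hs => h j s hs.1 hs.2]
    by_cases hsp : s = p j
    · subst hsp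
      simp only [vertex, ↓reduceIte, mul_one, hne, mul_zero, add_zero]
      linarith
    by_cases hsq : s = q j
    · subst hsq
      simp [vertex, Ne.symm hne]
    · simp [vertex, hsp, hsq, h j s hsp hsq]
  · simp only [vertex, ← hpq j hj]
    have hpj : x j (p j) = 1 := by
      rw [← hx.2 j, Fintype.sum_eq_single _ fun s hs => h j s hs (hpq j hj ▸ hs)]
    by_cases hsp : s = p j
    · subst hsp
      simp [hpj]
    · simp [hsp, h j s hsp (hpq j hj ▸ hsp)]

variable {u : (∀ j, S j) → Fin N → ℝ}

lemma Upure_of_eq_vertex_off {x : ∀ j, S j → ℝ} (hx : ∀ j, j ≠ i → x j = vertex p j)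
    (s : S i) : Upure u x i s = u (insertStrat i s fun j => p j.1) i := by
  rw [Upure, Fintype.sum_eq_single fun j : {j // j ≠ i} => p j.1]
  · rw [prod_eq_one fun j _ => by simp [hx j j.2, vertex], one_mul]
  · intro r hr
    obtain ⟨j, hj⟩ := Function.ne_iff.1 hr
    rw [prod_eq_zero (mem_univ j) (by simp [hx j j.2, vertex, hj]), zero_mul]

lemma replicator_lineMap_vertex (hcomp : IComparable i p q) (m : ℝ) :
    replicator u (lineMap (vertex p) (vertex q) m) i (q i) = m * (1 - m) * (u q i - u p i) := by
  set x := lineMap (vertex p) (vertex q) m with hx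
  have hoff : ∀ j, j ≠ i → x j = vertex p j := fun j hj => funext fun s => by
    rw [hx, lineMap_vertex_apply]
    simp only [vertex, ← hcomp.2 j hj]
    ring
  have hUp : Upure u x i (p i) = u p i := by
    rw [Upure_of_eq_vertex_off hoff, insertStrat_eq_of_eq_off fun _ _ => rfl]
  have hUq : Upure u x i (q i) = u q i := by
    rw [Upure_of_eq_vertex_off hoff, insertStrat_eq_of_eq_off hcomp.2]
  have hmean : ∑ t, x i t * Upure u x i t = (1 - m) * u p i + m * u q i := by
    simp only [x, lineMap_vertex_apply, vertex, add_mul, mul_assoc, sum_add_distrib, ← mul_sum,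
      ite_mul, one_mul, zero_mul, sum_ite_eq', mem_univ, if_true, hUp, hUq]
  have hxq : x i (q i) = m := by
    simp [x, lineMap_vertex_apply, vertex, Ne.symm hcomp.1]
  rw [replicator, hxq, hmean, hUq]
  ring

end Edge

section EdgeFlow

open AffineMap

variable {N : ℕ} {S : Fin N → Type*} [∀ i, Fintype (S i)] [∀ i, DecidableEq (S i)]
  {u : (∀ j, S j) → Fin N → ℝ} {φ : (∀ j, S j → ℝ) → ℝ → (∀ j, S j → ℝ)}
  {i : Fin N} {p q : ∀ j, S j} {m : ℝ}

lemma lineMap_vertex_mixedProfile (p q : ∀ j, S j) (hm0 : 0 ≤ m) (hm1 : m ≤ 1) :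
    MixedProfile (lineMap (vertex p) (vertex q) m) :=
  (vertex_mixedProfile p).lineMap (vertex_mixedProfile q) hm0 hm1

theorem SolvesReplicator.apply_lineMap_vertex (hφ : SolvesReplicator u φ)
    (hcomp : IComparable i p q) (hm0 : 0 ≤ m) (hm1 : m ≤ 1) {t : ℝ} (ht : 0 ≤ t) :
    φ (lineMap (vertex p) (vertex q) m) t =
      lineMap (vertex p) (vertex q) (φ (lineMap (vertex p) (vertex q) m) t i (q i)) :=
  have hx := lineMap_vertex_mixedProfile p q hm0 hm1
  (hφ.mixedProfile _ hx t).eq_lineMap_vertex hcomp fun j s hp hq =>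
    hφ.apply_eq_zero hx (by simp [lineMap_vertex_apply, vertex, hp, hq]) ht

theorem SolvesReplicator.monotoneOn_apply_lineMap_vertex (hφ : SolvesReplicator u φ)
    (hcomp : IComparable i p q) (hle : u p i ≤ u q i) (hm0 : 0 ≤ m) (hm1 : m ≤ 1) :
    MonotoneOn (fun τ => φ (lineMap (vertex p) (vertex q) m) τ i (q i)) (Set.Ici 0) := by
  have hx := lineMap_vertex_mixedProfile p q hm0 hm1
  have hderiv τ := hφ.hasDerivAt _ hx τ i (q i)
  refine monotoneOn_of_hasDerivWithinAt_nonneg (convex_Ici 0)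
    (fun τ _ => (hderiv τ).continuousAt.continuousWithinAt)
    (fun τ _ => (hderiv τ).hasDerivWithinAt) fun τ hτ => ?_
  rw [interior_Ici] at hτ
  have hy := hφ.mixedProfile _ hx τ
  rw [hφ.apply_lineMap_vertex hcomp hm0 hm1 hτ.le, replicator_lineMap_vertex hcomp]
  exact mul_nonneg (mul_nonneg (hy.1 i (q i)) (sub_nonneg.2 (hy.le_one i (q i))))
    (sub_nonneg.2 hle)

theorem SolvesReplicator.exists_apply_lineMap_vertex (hφ : SolvesReplicator u φ)
    (hcomp : IComparable i p q) (hle : u p i ≤ u q i) (hm0 : 0 ≤ m) (hm1 : m ≤ 1) {t : ℝ}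
    (ht : 0 ≤ t) : ∃ m', m ≤ m' ∧ m' ≤ 1 ∧
      φ (lineMap (vertex p) (vertex q) m) t = lineMap (vertex p) (vertex q) m' := by
  refine ⟨_, ?_, (hφ.mixedProfile _ (lineMap_vertex_mixedProfile p q hm0 hm1) t).le_one i (q i),
    hφ.apply_lineMap_vertex hcomp hm0 hm1 ht⟩
  have := hφ.monotoneOn_apply_lineMap_vertex hcomp hle hm0 hm1 Set.self_mem_Ici ht ht
  simpa [hφ.apply_zero, lineMap_vertex_apply, vertex, Ne.symm hcomp.1] using this

end EdgeFlow

section Chain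

variable {N : ℕ} {S : Fin N → Type*} [∀ i, Fintype (S i)]
  {φ : (∀ j, S j → ℝ) → ℝ → (∀ j, S j → ℝ)} {ε T : ℝ} {x y z : ∀ j, S j → ℝ}

lemma IsETChain.single {t : ℝ} (ht : T ≤ t) (h : dist (φ x t) y < ε) : IsETChain φ ε T x y :=
  ⟨1, fun k => if k = 0 then x else y, fun _ => t, le_rfl, rfl, rfl, fun k hk => by
    obtain rfl : k = 0 := Nat.lt_one_iff.1 hk
    exact ⟨ht, h⟩⟩

lemma IsETChain.trans (h₁ : IsETChain φ ε T x y) (h₂ : IsETChain φ ε T y z) :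
    IsETChain φ ε T x z := by
  obtain ⟨n₁, z₁, t₁, hn₁, hz₁0, hz₁n, hstep₁⟩ := h₁
  obtain ⟨n₂, z₂, t₂, hn₂, hz₂0, hz₂n, hstep₂⟩ := h₂
  refine ⟨n₁ + n₂, fun k => if k < n₁ then z₁ k else z₂ (k - n₁),
    fun k => if k < n₁ then t₁ k else t₂ (k - n₁), by omega,
    by simp [hz₁0, show 0 < n₁ by omega], ?_, fun k hk => ?_⟩
  · simp [hz₂n]
  by_cases hk₁ : k < n₁
  · simp only [if_pos hk₁]
    refine ⟨(hstep₁ k hk₁).1, ?_⟩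
    by_cases hk₁' : k + 1 < n₁
    · simpa [hk₁'] using (hstep₁ k hk₁).2
    · obtain rfl : n₁ = k + 1 := by omega
      simpa [hz₂0, ← hz₁n] using (hstep₁ k hk₁).2
  · simp only [if_neg hk₁, if_neg (show ¬k + 1 < n₁ by omega),
      show k + 1 - n₁ = k - n₁ + 1 by omega]
    exact hstep₂ (k - n₁) (by omega)

lemma Pseudo.trans (h₁ : Pseudo φ x y) (h₂ : Pseudo φ y z) : Pseudo φ x z :=
  fun ε hε T hT => (h₁ ε hε T hT).trans (h₂ ε hε T hT)

end Chain

section ResponseGraph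

open AffineMap

variable {N : ℕ} {S : Fin N → Type*} [∀ i, Fintype (S i)] [∀ i, DecidableEq (S i)]
  {u : (∀ j, S j) → Fin N → ℝ} {φ : (∀ j, S j → ℝ) → ℝ → (∀ j, S j → ℝ)}

theorem SolvesReplicator.pseudo_vertex_self (hφ : SolvesReplicator u φ) (v : ∀ j, S j) :
    Pseudo φ (vertex v) (vertex v) :=
  fun ε hε T hT => .single le_rfl (by rwa [hφ.apply_vertex v hT.le, dist_self])

theorem SolvesReplicator.isETChain_lineMap_vertex (hφ : SolvesReplicator u φ) {i : Fin N}
    {p q : ∀ j, S j} (hcomp : IComparable i p q) (hle : u p i ≤ u q i) {ε T δ : ℝ}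
    (hT : 0 ≤ T) (hδ : 0 ≤ δ) (hδε : δ < ε) (k : ℕ) :
    ∀ m, 0 ≤ m → m ≤ 1 → 1 ≤ m + k * δ →
      IsETChain φ ε T (lineMap (vertex p) (vertex q) m) (vertex q) := by
  induction k with
  | zero =>
    intro m _ hm1 hk
    obtain rfl : m = 1 := by simp only [CharP.cast_eq_zero, zero_mul, add_zero] at hk; linarith
    exact .single le_rfl (by rw [lineMap_apply_one, hφ.apply_vertex q hT, dist_self]; linarith)
  | succ k ih =>
    intro m hm0 hm1 hk
    obtain ⟨m', hmm', hm'1, hflow⟩ := hφ.exists_apply_lineMap_vertex hcomp hle hm0 hm1 hT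
    have hm'' : m' ≤ min 1 (m' + δ) := le_min hm'1 (by linarith)
    refine .trans (.single le_rfl ?_) (ih (min 1 (m' + δ)) (by linarith) (min_le_left _ _) ?_)
    · rw [hflow]
      calc _ ≤ |m' - min 1 (m' + δ)| := dist_lineMap_vertex_le p q _ _
        _ ≤ δ := by
          rw [abs_sub_comm, abs_of_nonneg (by linarith)]
          linarith [min_le_right 1 (m' + δ)]
        _ < ε := hδε
    · have : 0 ≤ (k : ℝ) * δ := by positivity
      push_cast at hk
      rcases min_cases 1 (m' + δ) with ⟨h, _⟩ | ⟨h, _⟩ <;> rw [h] <;> linarith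

theorem SolvesReplicator.pseudo_of_responseArc (hφ : SolvesReplicator u φ) {p q : ∀ j, S j}
    (h : ResponseArc u p q) : Pseudo φ (vertex p) (vertex q) := by
  obtain ⟨i, hcomp, hle⟩ := h
  intro ε hε T hT
  obtain ⟨k, hk⟩ := exists_nat_ge (2 / ε)
  have hkε : 2 ≤ k * ε := (div_le_iff₀ hε).1 hk
  simpa using hφ.isETChain_lineMap_vertex hcomp hle hT.le (half_pos hε).le (half_lt_self hε) k
    0 le_rfl zero_le_one (by linarith)

end ResponseGraph

theorem path_implies_pseudo_orbit_general {N : ℕ} {S : Fin N → Type*}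
    [∀ i, Fintype (S i)] [∀ i, DecidableEq (S i)]
    (u : (∀ j, S j) → Fin N → ℝ)
    (φ : (∀ j, S j → ℝ) → ℝ → (∀ j, S j → ℝ))
    (hflow0 : ∀ x, φ x 0 = x)
    (hmem : ∀ x, MixedProfile x → ∀ t : ℝ, MixedProfile (φ x t))
    (hderiv : ∀ x, MixedProfile x → ∀ (t : ℝ) (p : Fin N) (s : S p),
      HasDerivAt (fun τ => φ x τ p s) (replicator u (φ x t) p s) t)
    (v w : ∀ j, S j) (hpath : Relation.ReflTransGen (ResponseArc u) v w) :
    Pseudo φ (vertex v) (vertex w) := by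
  have hφ : SolvesReplicator u φ := ⟨hflow0, hmem, hderiv⟩
  induction hpath with
  | refl => exact hφ.pseudo_vertex_self v
  | tail _ harc ih => exact ih.trans (hφ.pseudo_of_responseArc harc)

/-- if there is a directed path from `v` to `w` in the response graph,
then under the replicator flow there is a pseudo-orbit from `v` to `w` (viewing pure
profiles as vertices of the product of simplices). -/
theorem path_implies_pseudo_orbit {N : ℕ} {S : Fin N → Type*}
    [∀ i, Fintype (S i)] [∀ i, DecidableEq (S i)]
    (u : (∀ j, S j) → Fin N → ℝ)
    (φ : (∀ j, S j → ℝ) → ℝ → (∀ j, S j → ℝ))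
    (hflow0 : ∀ x, φ x 0 = x)
    (hflowadd : ∀ x s t, φ (φ x s) t = φ x (s + t))
    (hmem : ∀ x, MixedProfile x → ∀ t : ℝ, MixedProfile (φ x t))
    (hderiv : ∀ x, MixedProfile x → ∀ (t : ℝ) (p : Fin N) (s : S p),
      HasDerivAt (fun τ => φ x τ p s) (replicator u (φ x t) p s) t)
    (v w : ∀ j, S j) (hpath : Relation.ReflTransGen (ResponseArc u) v w) :
    Pseudo φ (vertex v) (vertex w) :=
  path_implies_pseudo_orbit_general u φ hflow0 hmem hderiv v w hpath
end

section
/- If Y is an attracting subgame of a finite game (no response-graph arcs leave Y), then the set of mixed profiles supported on Y is an attractor of the replicator flow. -/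
/-!
The mass `outsideMass Y x` that a profile puts on strategies outside `Y` is a Lyapunov function.
Against a profile supported on `Y`, a strategy outside `Y p` earns strictly less than the mean
payoff of player `p`, since it loses against every pure antiprofile in `Y`. By compactness this
payoff gap is at most `-c < 0` on a whole sublevel set `{outsideMass ≤ η}`, where the replicator
equation then gives `d/dt outsideMass ≤ -c • outsideMass`. Hence trajectories starting in
`{outsideMass < η}` lose their outside mass exponentially fast, uniformly in the initial point, and
on the compact space of mixed profiles small outside mass forces small distance to the face. The
face itself is invariant because each coordinate solves `ẋ = x g`, so it vanishes identically
once it vanishes at one time.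
-/

open Finset

/-- A set is invariant under the flow `φ`. -/
def IsInvariant' {X : Type*} (φ : X → ℝ → X) (A : Set X) : Prop :=
  ∀ x ∈ A, ∀ t : ℝ, φ x t ∈ A

/-- `A` is an attractor of `φ`: a compact nonempty invariant set having a
neighbourhood all of whose points converge uniformly to `A`. -/
def IsAttractor {X : Type*} [MetricSpace X] (φ : X → ℝ → X) (A : Set X) : Prop :=
  IsCompact A ∧ A.Nonempty ∧ IsInvariant' φ A ∧
    ∃ U : Set X, IsOpen U ∧ A ⊆ U ∧
      ∀ ε > (0 : ℝ), ∃ T : ℝ, ∀ t ≥ T, ∀ x ∈ U, Metric.infDist (φ x t) A < ε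

open Filter Topology

theorem Finset.sum_mul_lt_sum_mul_of_pos {ι R : Type*} [Fintype ι] [CommRing R] [LinearOrder R]
    [IsStrictOrderedRing R] {w a b : ι → R} (hw : ∀ i, 0 ≤ w i) (hpos : 0 < ∑ i, w i)
    (hab : ∀ i, 0 < w i → a i < b i) : ∑ i, w i * a i < ∑ i, w i * b i := by
  obtain ⟨i, -, hi⟩ :=
    exists_lt_of_sum_lt (s := univ) (f := fun _ => (0 : R)) (g := w) (by simpa using hpos)
  refine sum_lt_sum (fun j _ => ?_) ⟨i, mem_univ i, mul_lt_mul_of_pos_left (hab i hi) hi⟩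
  rcases (hw j).eq_or_lt with h | h
  · simp [← h]
  · exact mul_le_mul_of_nonneg_left (hab j h).le h.le

instance compactSpace_mixedProfile {N : ℕ} {S : Fin N → Type*} [∀ i, Fintype (S i)] :
    CompactSpace {x : ∀ j, S j → ℝ // MixedProfile x} := by
  have : {x : ∀ j, S j → ℝ | MixedProfile x} = Set.univ.pi fun i => stdSimplex ℝ (S i) := by
    ext x; simp [MixedProfile, stdSimplex, forall_and]
  refine (isCompact_iff_compactSpace (s := {x : ∀ j, S j → ℝ | MixedProfile x})).1 ?_
  rw [this]
  exact isCompact_univ_pi fun i => isCompact_stdSimplex ℝ (S i)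

theorem IsCompact.exists_pos_forall_lt_neg {X ι : Type*} [TopologicalSpace X] [Finite ι]
    {K : Set X} (hK : IsCompact K) {f : ι → X → ℝ} (hf : ∀ i, ContinuousOn (f i) K)
    {P : ι → Prop} (hneg : ∀ i, P i → ∀ x ∈ K, f i x < 0) :
    ∃ c > 0, ∀ i, P i → ∀ x ∈ K, f i x < -c := by
  have hev : ∀ i, ∀ᶠ c in 𝓝[>] (0 : ℝ), P i → ∀ x ∈ K, f i x < -c := by
    intro i
    by_cases hi : P i
    · obtain ⟨a, ha, hle⟩ := hK.exists_forall_le' (hf i).neg (a := 0)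
        fun x hx => neg_pos.2 (hneg i hi x hx)
      filter_upwards [Ioo_mem_nhdsGT ha] with c hc _ x hx
      linarith [show a ≤ -f i x from hle x hx, hc.2]
    · exact Filter.Eventually.of_forall fun _ h => absurd h hi
  obtain ⟨c, hc, hpos⟩ := ((Filter.eventually_all.2 hev).and self_mem_nhdsWithin).exists
  exact ⟨c, hpos, hc⟩

theorem exists_pos_forall_le_imp_mem {X : Type*} [TopologicalSpace X] [CompactSpace X]
    {V : X → ℝ} (hV : Continuous V) {O : Set X} (hO : IsOpen O) (hVO : ∀ x, V x ≤ 0 → x ∈ O) :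
    ∃ η > 0, ∀ x, V x ≤ η → x ∈ O := by
  obtain ⟨η, hη, hle⟩ := hO.isClosed_compl.isCompact.exists_forall_le' hV.continuousOn (a := 0)
    fun x hx => lt_of_not_ge fun h => hx (hVO x h)
  exact ⟨η / 2, half_pos hη, fun x hx => by_contra fun h => by linarith [hle x h]⟩

theorem eq_zero_of_hasDerivAt_mul_of_nonneg {f g : ℝ → ℝ} (hf : ∀ τ, HasDerivAt f (f τ * g τ) τ)
    (hg : Continuous g) (h0 : f 0 = 0) {t : ℝ} (ht : 0 ≤ t) : f t = 0 := by
  obtain ⟨C, hC⟩ :=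
    (isCompact_Icc (a := (0 : ℝ)) (b := t)).exists_bound_of_continuousOn hg.continuousOn
  have h := norm_le_gronwallBound_of_norm_deriv_right_le (f := f) (δ := 0) (K := C) (ε := 0)
    (fun τ _ => (hf τ).continuousAt.continuousWithinAt) (fun τ _ => (hf τ).hasDerivWithinAt)
    (by simp [h0]) (fun τ hτ => by
      rw [norm_mul, mul_comm, add_zero]
      exact mul_le_mul_of_nonneg_right (hC τ (Set.Ico_subset_Icc_self hτ)) (norm_nonneg (f τ)))
    t ⟨ht, le_rfl⟩
  rw [gronwallBound_ε0_δ0] at h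
  simpa using h

theorem eq_zero_of_hasDerivAt_mul {f g : ℝ → ℝ} (hf : ∀ τ, HasDerivAt f (f τ * g τ) τ)
    (hg : Continuous g) (h0 : f 0 = 0) (t : ℝ) : f t = 0 := by
  rcases le_total 0 t with ht | ht
  · exact eq_zero_of_hasDerivAt_mul_of_nonneg hf hg h0 ht
  · have hrev : ∀ τ, HasDerivAt (fun σ => f (-σ)) (f (-τ) * -g (-τ)) τ := fun τ => by
      simpa [Function.comp_def] using (hf (-τ)).comp τ (hasDerivAt_neg τ)
    simpa using eq_zero_of_hasDerivAt_mul_of_nonneg hrev (hg.comp continuous_neg).neg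
      (by simpa using h0) (neg_nonneg.2 ht)

theorem le_mul_exp_of_hasDerivAt {f f' : ℝ → ℝ} {c c' η : ℝ} (hf : ∀ τ, HasDerivAt f (f' τ) τ)
    (hη : 0 < η) (hc' : 0 ≤ c') (hc : c' < c) (h0 : f 0 ≤ η)
    (hbound : ∀ τ ≥ 0, f τ ≤ η → f' τ ≤ -c * f τ) {t : ℝ} (ht : 0 ≤ t) :
    f t ≤ η * Real.exp (-(c' * t)) := by
  have hB (τ : ℝ) :
      HasDerivAt (fun σ => η * Real.exp (-(c' * σ))) (-c' * (η * Real.exp (-(c' * τ)))) τ :=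
    (((hasDerivAt_id' τ).const_mul c').fun_neg.exp.const_mul η).congr_deriv (by ring)
  -- fencing with the slower rate `c' < c` makes the comparison at the boundary strict
  refine image_le_of_deriv_right_lt_deriv_boundary (a := 0) (b := t)
    (fun τ _ => (hf τ).continuousAt.continuousWithinAt) (fun τ _ => (hf τ).hasDerivWithinAt)
    (by simpa using h0) hB (fun τ hτ hfB => ?_) ⟨ht, le_rfl⟩
  have hpos : 0 < η * Real.exp (-(c' * τ)) := by positivity
  have hle : η * Real.exp (-(c' * τ)) ≤ η :=
    mul_le_of_le_one_right hη.le (Real.exp_le_one_iff.2 (by nlinarith [hτ.1]))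
  calc f' τ ≤ -c * f τ := hbound τ hτ.1 (hfB ▸ hle)
    _ < -c' * (η * Real.exp (-(c' * τ))) := by rw [hfB]; nlinarith

section Game

variable {N : ℕ} {S : Fin N → Type*} [∀ i, Fintype (S i)]

def payoffGap (u : (∀ j, S j) → Fin N → ℝ) (x : ∀ j, S j → ℝ) (p : Fin N) (s : S p) : ℝ :=
  Upure u x p s - ∑ t : S p, x p t * Upure u x p t

def SupportedOn (Y : ∀ i, Finset (S i)) (x : ∀ j, S j → ℝ) : Prop :=
  ∀ p, ∀ s ∉ Y p, x p s = 0

def outsideMass [∀ i, DecidableEq (S i)] (Y : ∀ i, Finset (S i)) (x : ∀ j, S j → ℝ) : ℝ :=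
  ∑ p, ∑ s ∈ (Y p)ᶜ, x p s

def IsAttractingSubgame (u : (∀ j, S j) → Fin N → ℝ) (Y : ∀ i, Finset (S i)) : Prop :=
  ∀ (p : Fin N) (s : S p), s ∉ Y p → ∀ t ∈ Y p,
    ∀ q : (∀ j : {j : Fin N // j ≠ p}, S j), (∀ j : {j : Fin N // j ≠ p}, q j ∈ Y ↑j) →
      u (insertStrat p s q) p < u (insertStrat p t q) p

theorem continuous_payoffGap (u : (∀ j, S j) → Fin N → ℝ) (p : Fin N) (s : S p) :
    Continuous fun x => payoffGap u x p s := by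
  unfold payoffGap Upure
  fun_prop

theorem MixedProfile.sum_prod_eq_one {x : ∀ j, S j → ℝ} (hx : MixedProfile x) (p : Fin N) :
    ∑ q : (∀ j : {j : Fin N // j ≠ p}, S j), ∏ j : {j : Fin N // j ≠ p}, x j (q j) = 1 := by
  rw [← Fintype.prod_sum]
  exact Finset.prod_eq_one fun j _ => hx.2 j

theorem Upure_lt_Upure {u : (∀ j, S j) → Fin N → ℝ} {Y : ∀ i, Finset (S i)}
    (hY : IsAttractingSubgame u Y) {x : ∀ j, S j → ℝ} (hx : MixedProfile x)
    (hxY : SupportedOn Y x) {p : Fin N} {s t : S p} (hs : s ∉ Y p) (ht : t ∈ Y p) :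
    Upure u x p s < Upure u x p t := by
  refine Finset.sum_mul_lt_sum_mul_of_pos (fun q => prod_nonneg fun j _ => hx.1 _ _)
    (by rw [hx.sum_prod_eq_one]; exact one_pos) fun q hq => hY p s hs t ht q fun j => ?_
  by_contra hj
  exact hq.ne' (prod_eq_zero (mem_univ j) (hxY _ _ hj))

theorem payoffGap_neg {u : (∀ j, S j) → Fin N → ℝ} {Y : ∀ i, Finset (S i)}
    (hY : IsAttractingSubgame u Y) {x : ∀ j, S j → ℝ} (hx : MixedProfile x)
    (hxY : SupportedOn Y x) {p : Fin N} {s : S p} (hs : s ∉ Y p) : payoffGap u x p s < 0 := by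
  have hlt : ∑ t, x p t * Upure u x p s < ∑ t, x p t * Upure u x p t :=
    Finset.sum_mul_lt_sum_mul_of_pos (hx.1 p) (by rw [hx.2 p]; exact one_pos) fun t ht =>
      Upure_lt_Upure hY hx hxY hs (by_contra fun h => ht.ne' (hxY p t h))
  rw [← Finset.sum_mul, hx.2 p, one_mul] at hlt
  exact sub_neg.2 hlt

theorem continuous_of_hasDerivAt_replicator {u : (∀ j, S j) → Fin N → ℝ}
    {γ : ℝ → ∀ j, S j → ℝ}
    (hγ : ∀ t p s, HasDerivAt (fun τ => γ τ p s) (replicator u (γ t) p s) t) : Continuous γ :=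
  continuous_pi fun p => continuous_pi fun s =>
    continuous_iff_continuousAt.2 fun t => (hγ t p s).continuousAt

theorem apply_eq_zero_of_hasDerivAt_replicator {u : (∀ j, S j) → Fin N → ℝ}
    {γ : ℝ → ∀ j, S j → ℝ}
    (hγ : ∀ t p s, HasDerivAt (fun τ => γ τ p s) (replicator u (γ t) p s) t)
    {p : Fin N} {s : S p} (h0 : γ 0 p s = 0) (t : ℝ) : γ t p s = 0 :=
  eq_zero_of_hasDerivAt_mul (hγ · p s)
    ((continuous_payoffGap u p s).comp (continuous_of_hasDerivAt_replicator hγ)) h0 t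

variable [∀ i, DecidableEq (S i)]

theorem exists_supportedOn_mixedProfile {Y : ∀ i, Finset (S i)}
    (hY : ∀ i, (Y i).Nonempty) : ∃ x, MixedProfile x ∧ SupportedOn Y x := by
  refine ⟨fun i => Pi.single (hY i).choose 1, ⟨fun i s => ?_, fun i => by simp⟩, fun p s hs => ?_⟩
  · by_cases h : s = (hY i).choose <;> simp [h]
  · exact Pi.single_eq_of_ne (by rintro rfl; exact hs (hY p).choose_spec) _

theorem continuous_outsideMass (Y : ∀ i, Finset (S i)) : Continuous (outsideMass Y) := by
  unfold outsideMass
  fun_prop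

theorem outsideMass_nonneg (Y : ∀ i, Finset (S i)) {x : ∀ j, S j → ℝ} (hx : MixedProfile x) :
    0 ≤ outsideMass Y x :=
  sum_nonneg fun p _ => sum_nonneg fun s _ => hx.1 p s

theorem outsideMass_nonpos_iff (Y : ∀ i, Finset (S i)) {x : ∀ j, S j → ℝ}
    (hx : MixedProfile x) : outsideMass Y x ≤ 0 ↔ SupportedOn Y x := by
  rw [(outsideMass_nonneg Y hx).ge_iff_eq', outsideMass,
    sum_eq_zero_iff_of_nonneg fun p _ => sum_nonneg fun s _ => hx.1 p s]
  simp only [mem_univ, true_implies, sum_eq_zero_iff_of_nonneg fun s _ => hx.1 _ s, mem_compl,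
    SupportedOn]

theorem exists_payoffGap_le_of_outsideMass_le {u : (∀ j, S j) → Fin N → ℝ}
    {Y : ∀ i, Finset (S i)} (hY : IsAttractingSubgame u Y) :
    ∃ c > 0, ∃ η > 0, ∀ x, MixedProfile x → outsideMass Y x ≤ η →
      ∀ p, ∀ s ∉ Y p, payoffGap u x p s ≤ -c := by
  let X := {x : ∀ j, S j → ℝ // MixedProfile x}
  have hV : Continuous fun x : X => outsideMass Y x.1 :=
    (continuous_outsideMass Y).comp continuous_subtype_val
  have hG (e : Σ p, S p) : Continuous fun x : X => payoffGap u x.1 e.1 e.2 :=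
    (continuous_payoffGap u e.1 e.2).comp continuous_subtype_val
  obtain ⟨c, hc, hcA⟩ := (isClosed_le hV continuous_const).isCompact.exists_pos_forall_lt_neg
    (fun e => (hG e).continuousOn) (P := fun e => e.2 ∉ Y e.1)
    fun e he x hx => payoffGap_neg hY x.2 ((outsideMass_nonpos_iff Y x.2).1 hx) he
  let O : Set X := {x | ∀ e : Σ p, S p, e.2 ∉ Y e.1 → payoffGap u x.1 e.1 e.2 < -c}
  have hO : IsOpen O := by
    simp only [O, Set.ofPred_forall]
    refine isOpen_iInter_of_finite fun e => ?_
    by_cases he : e.2 ∈ Y e.1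
    · simp [he]
    · simpa [he] using isOpen_lt (hG e) continuous_const
  obtain ⟨η, hη, hηO⟩ := exists_pos_forall_le_imp_mem hV hO fun x hx e he => hcA e he x hx
  exact ⟨c, hc, η, hη, fun x hx hxη p s hs => (hηO ⟨x, hx⟩ hxη ⟨p, s⟩ hs).le⟩

theorem outsideMass_le_of_hasDerivAt_replicator {u : (∀ j, S j) → Fin N → ℝ}
    {γ : ℝ → ∀ j, S j → ℝ} {Y : ∀ i, Finset (S i)} {c η : ℝ}
    (hγ : ∀ t p s, HasDerivAt (fun τ => γ τ p s) (replicator u (γ t) p s) t)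
    (hmix : ∀ t, MixedProfile (γ t)) (hc : 0 < c) (hη : 0 < η)
    (hgap : ∀ x, MixedProfile x → outsideMass Y x ≤ η → ∀ p, ∀ s ∉ Y p, payoffGap u x p s ≤ -c)
    (h0 : outsideMass Y (γ 0) ≤ η) {t : ℝ} (ht : 0 ≤ t) :
    outsideMass Y (γ t) ≤ η * Real.exp (-(c / 2 * t)) := by
  have hderiv (τ : ℝ) : HasDerivAt (fun σ => outsideMass Y (γ σ))
      (∑ p, ∑ s ∈ (Y p)ᶜ, γ τ p s * payoffGap u (γ τ) p s) τ :=
    HasDerivAt.fun_sum fun p _ => HasDerivAt.fun_sum fun s _ => hγ τ p s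
  refine le_mul_exp_of_hasDerivAt (c := c) hderiv hη (by positivity) (by linarith) h0
    (fun τ _ hτ => ?_) ht
  rw [outsideMass, mul_sum]
  refine sum_le_sum fun p _ => ?_
  rw [mul_sum]
  refine sum_le_sum fun s hs => ?_
  rw [mul_comm (-c)]
  exact mul_le_mul_of_nonneg_left (hgap _ (hmix τ) hτ p s (mem_compl.1 hs)) ((hmix τ).1 p s)

end Game

theorem attracting_subgame_is_attractor_general {N : ℕ} {S : Fin N → Type*}
    [∀ i, Fintype (S i)] [∀ i, DecidableEq (S i)]
    (u : (∀ j, S j) → Fin N → ℝ)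
    (Y : ∀ i, Finset (S i)) (hYne : ∀ i, (Y i).Nonempty)
    (hattr : ∀ (p : Fin N) (s : S p), s ∉ Y p → ∀ t ∈ Y p,
      ∀ q : (∀ j : {j : Fin N // j ≠ p}, S j), (∀ j : {j : Fin N // j ≠ p}, q j ∈ Y ↑j) →
        u (insertStrat p s q) p < u (insertStrat p t q) p)
    (φ : {x : ∀ j, S j → ℝ // MixedProfile x} → ℝ → {x : ∀ j, S j → ℝ // MixedProfile x})
    (hflow0 : ∀ x, φ x 0 = x)
    (hderiv : ∀ x (t : ℝ) (p : Fin N) (s : S p),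
      HasDerivAt (fun τ => (φ x τ : ∀ j, S j → ℝ) p s)
        (replicator u (φ x t : ∀ j, S j → ℝ) p s) t) :
    IsAttractor φ
      {x : {x : ∀ j, S j → ℝ // MixedProfile x} |
        ∀ (p : Fin N) (s : S p), s ∉ Y p → (x : ∀ j, S j → ℝ) p s = 0} := by
  set A := {x : {x : ∀ j, S j → ℝ // MixedProfile x} |
    ∀ (p : Fin N) (s : S p), s ∉ Y p → x.1 p s = 0}
  have hV : Continuous fun x : {x : ∀ j, S j → ℝ // MixedProfile x} => outsideMass Y x.1 :=
    (continuous_outsideMass Y).comp continuous_subtype_val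
  have hA : A = {x | outsideMass Y x.1 ≤ 0} :=
    Set.ext fun x => (outsideMass_nonpos_iff Y x.2).symm
  obtain ⟨c, hc, η, hη, hgap⟩ := exists_payoffGap_le_of_outsideMass_le hattr
  obtain ⟨x₀, hx₀, hx₀Y⟩ := exists_supportedOn_mixedProfile hYne
  refine ⟨hA ▸ (isClosed_le hV continuous_const).isCompact, ⟨⟨x₀, hx₀⟩, hx₀Y⟩,
    fun x hx t p s hs =>
      apply_eq_zero_of_hasDerivAt_replicator (hderiv x) (by rw [hflow0]; exact hx p s hs) t,
    {x | outsideMass Y x.1 < η}, isOpen_lt hV continuous_const,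
    fun x hx => (hA.subset hx).trans_lt hη, fun ε hε => ?_⟩
  obtain ⟨δ, hδ, hδA⟩ := exists_pos_forall_le_imp_mem hV
    (isOpen_lt (Metric.continuous_infDist_pt A) continuous_const)
    fun x hx => show Metric.infDist x A < ε by
      rwa [Metric.infDist_zero_of_mem (hA.symm.subset hx)]
  have hdecay : Tendsto (fun t => η * Real.exp (-(c / 2 * t))) atTop (𝓝 0) := by
    simpa using (Real.tendsto_exp_neg_atTop_nhds_zero.comp
      (tendsto_id.const_mul_atTop (half_pos hc))).const_mul η
  obtain ⟨T, hT⟩ := eventually_atTop.1 (hdecay.eventually (ge_mem_nhds hδ))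
  refine ⟨max T 0, fun t ht x hx => hδA _ ?_⟩
  exact (outsideMass_le_of_hasDerivAt_replicator (hderiv x) (fun τ => (φ x τ).2) hc hη hgap
    (by rw [hflow0]; exact hx.le) (le_of_max_le_right ht)).trans (hT t (le_of_max_le_left ht))

/-- if `Y` is an attracting subgame (every response-graph arc from a
profile in `Y` stays in `Y`, i.e. strategies outside `Y` get strictly smaller payoff
against `Y`-antiprofiles), then the set of mixed profiles supported on `Y` is an
attractor of the replicator flow. -/
theorem attracting_subgame_is_attractor {N : ℕ} {S : Fin N → Type*}
    [∀ i, Fintype (S i)] [∀ i, DecidableEq (S i)]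
    (u : (∀ j, S j) → Fin N → ℝ)
    (Y : ∀ i, Finset (S i)) (hYne : ∀ i, (Y i).Nonempty)
    (hattr : ∀ (p : Fin N) (s : S p), s ∉ Y p → ∀ t ∈ Y p,
      ∀ q : (∀ j : {j : Fin N // j ≠ p}, S j), (∀ j : {j : Fin N // j ≠ p}, q j ∈ Y ↑j) →
        u (insertStrat p s q) p < u (insertStrat p t q) p)
    (φ : {x : ∀ j, S j → ℝ // MixedProfile x} → ℝ → {x : ∀ j, S j → ℝ // MixedProfile x})
    (hflow0 : ∀ x, φ x 0 = x)
    (hflowadd : ∀ x s t, φ (φ x s) t = φ x (s + t))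
    (hcont : Continuous fun p : {x : ∀ j, S j → ℝ // MixedProfile x} × ℝ => φ p.1 p.2)
    (hderiv : ∀ x (t : ℝ) (p : Fin N) (s : S p),
      HasDerivAt (fun τ => (φ x τ : ∀ j, S j → ℝ) p s)
        (replicator u (φ x t : ∀ j, S j → ℝ) p s) t) :
    IsAttractor φ
      {x : {x : ∀ j, S j → ℝ // MixedProfile x} |
        ∀ (p : Fin N) (s : S p), s ∉ Y p → (x : ∀ j, S j → ℝ) p s = 0} :=
  attracting_subgame_is_attractor_general u Y hYne hattr φ hflow0 hderiv
end

section
/- A strict pure Nash equilibrium of a finite game is an attractor (as a singleton) of the replicator flow. -/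
open Finset

/-!
The Lyapunov function `V x = ∑ i, (1 - x i (p i))` dominates the sup-distance to the vertex.
Strictness gives every unilateral deviation a payoff deficit bounded away from zero near the
vertex, so along the replicator flow `V' ≤ -c V` on a sublevel set of `V`, and comparison with an
exponential barrier gives uniform exponential decay there. Since payoffs are bounded,
`|V'| ≤ K V` everywhere, and Grönwall's inequality in both time directions keeps the vertex fixed.
-/

open Real Topology

section Calculus

lemma eq_zero_of_abs_deriv_le_mul_abs {g g' : ℝ → ℝ} {K : ℝ} (hg : ∀ t, HasDerivAt g (g' t) t)
    (hK : ∀ t, |g' t| ≤ K * |g t|) (h0 : g 0 = 0) (t : ℝ) : g t = 0 := by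
  rcases le_total 0 t with ht | ht
  · exact eq_zero_of_abs_deriv_le_mul_abs_self_of_eq_zero_right
      (fun τ _ => (hg τ).continuousAt.continuousWithinAt) (fun τ _ => (hg τ).hasDerivWithinAt)
      h0 (fun τ _ => hK τ) t ⟨ht, le_rfl⟩
  · have hrev : ∀ τ, HasDerivAt (fun τ => g (-τ)) (-g' (-τ)) τ := fun τ => by
      simpa [Function.comp_def] using (hg (-τ)).comp τ (hasDerivAt_neg τ)
    simpa using eq_zero_of_abs_deriv_le_mul_abs_self_of_eq_zero_right
      (fun τ _ => (hrev τ).continuousAt.continuousWithinAt)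
      (fun τ _ => (hrev τ).hasDerivWithinAt) (by simpa using h0)
      (fun τ _ => by simpa using hK (-τ)) (-t) ⟨neg_nonneg.2 ht, le_rfl⟩

/-- `g` is compared with the barrier `η * exp (-(c / 2) * t)`, which decays strictly more slowly
than `g` wherever the two meet. -/
lemma le_mul_exp_of_deriv_le_neg_mul_on_sublevel {g g' : ℝ → ℝ} {c η : ℝ} (hc : 0 < c)
    (hη : 0 < η) (hg : ∀ t, HasDerivAt g (g' t) t) (hdecay : ∀ t, g t ≤ η → g' t ≤ -c * g t)
    (h0 : g 0 ≤ η) {t : ℝ} (ht : 0 ≤ t) : g t ≤ η * exp (-(c / 2) * t) := by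
  have hB : ∀ τ, HasDerivAt (fun τ => η * exp (-(c / 2) * τ))
      (-(c / 2) * (η * exp (-(c / 2) * τ))) τ := fun τ =>
    ((((hasDerivAt_id τ).const_mul (-(c / 2))).exp).const_mul η).congr_deriv (by
      simp only [id, mul_one]; ring)
  refine image_le_of_deriv_right_lt_deriv_boundary
    (fun τ _ => (hg τ).continuousAt.continuousWithinAt) (fun τ _ => (hg τ).hasDerivWithinAt)
    (by simpa using h0) hB (fun τ hτ hgτ => ?_) ⟨ht, le_rfl⟩
  have hBpos : 0 < η * exp (-(c / 2) * τ) := by positivity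
  have hBle : η * exp (-(c / 2) * τ) ≤ η :=
    mul_le_of_le_one_right hη.le (exp_le_one_iff.2 (by nlinarith [hτ.1]))
  calc g' τ ≤ -c * g τ := hdecay τ (hgτ ▸ hBle)
    _ < -(c / 2) * (η * exp (-(c / 2) * τ)) := by rw [hgτ]; nlinarith

end Calculus

theorem isAttractor_singleton_of_lyapunov {X : Type*} [MetricSpace X] {φ : X → ℝ → X} {e : X}
    {V V' : X → ℝ} {K c η : ℝ} (hV : Continuous V) (hdist : ∀ x, dist x e ≤ V x) (hVe : V e = 0)
    (hflow0 : ∀ x, φ x 0 = x) (hderiv : ∀ x t, HasDerivAt (fun τ => V (φ x τ)) (V' (φ x t)) t)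
    (hK : ∀ x, |V' x| ≤ K * V x) (hc : 0 < c) (hη : 0 < η)
    (hdecay : ∀ x, V x ≤ η → V' x ≤ -c * V x) : IsAttractor φ {e} := by
  have hV0 : ∀ x, 0 ≤ V x := fun x => dist_nonneg.trans (hdist x)
  have hinv : ∀ t, φ e t = e := fun t => dist_le_zero.1 <| (hdist _).trans_eq <|
    eq_zero_of_abs_deriv_le_mul_abs (hderiv e) (fun τ => by rw [abs_of_nonneg (hV0 _)]; exact hK _)
      (by rw [hflow0, hVe]) t
  have hbound : ∀ x, V x < η → ∀ t ≥ 0, dist (φ x t) e ≤ η * exp (-(c / 2) * t) :=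
    fun x hx t ht => (hdist _).trans <| le_mul_exp_of_deriv_le_neg_mul_on_sublevel hc hη
      (hderiv x) (fun τ => hdecay _) (by rw [hflow0]; exact hx.le) ht
  refine ⟨isCompact_singleton, Set.singleton_nonempty e, ?_, {x | V x < η},
    isOpen_lt hV continuous_const, by simpa [hVe] using hη, fun ε hε => ?_⟩
  · rintro x rfl t
    exact hinv t
  have hlim : Filter.Tendsto (fun t => η * exp (-(c / 2) * t)) Filter.atTop (𝓝 0) := by
    simpa using (tendsto_exp_atBot.comp
      (Filter.tendsto_id.const_mul_atTop_of_neg (by linarith : -(c / 2) < 0))).const_mul η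
  obtain ⟨T, hT⟩ := Filter.eventually_atTop.1 (hlim.eventually_lt_const hε)
  refine ⟨max T 0, fun t ht x hx => ?_⟩
  rw [Metric.infDist_singleton]
  exact (hbound x hx t (le_of_max_le_right ht)).trans_lt (hT t (le_of_max_le_left ht))

section ProbabilityVector

variable {ι : Type*} [Fintype ι] [DecidableEq ι] {w f : ι → ℝ} {t : ι}

lemma mul_one_sub_le_sum_mul {c : ℝ} (hw : ∀ s, 0 ≤ w s) (hw1 : ∑ s, w s = 1) (hft : f t = 0)
    (hf : ∀ s, s ≠ t → c ≤ f s) : c * (1 - w t) ≤ ∑ s, w s * f s :=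
  calc c * (1 - w t) = ∑ s ∈ univ.erase t, w s * c := by
        rw [← sum_mul, sum_erase_eq_sub (mem_univ t), hw1, mul_comm]
    _ ≤ ∑ s ∈ univ.erase t, w s * f s :=
        sum_le_sum fun s hs => mul_le_mul_of_nonneg_left (hf s (ne_of_mem_erase hs)) (hw s)
    _ = ∑ s, w s * f s := sum_erase _ (by rw [hft, mul_zero])

lemma abs_sum_mul_le {C : ℝ} (hw : ∀ s, 0 ≤ w s) (hw1 : ∑ s, w s = 1) (hft : f t = 0)
    (hf : ∀ s, |f s| ≤ C) : |∑ s, w s * f s| ≤ C * (1 - w t) := by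
  have hlow := mul_one_sub_le_sum_mul hw hw1 hft fun s _ => neg_le_of_abs_le (hf s)
  have hupp := mul_one_sub_le_sum_mul (f := -f) (t := t) hw hw1 (by simp [hft])
    fun s _ => neg_le_neg (le_of_abs_le (hf s))
  simp only [Pi.neg_apply, mul_neg, sum_neg_distrib] at hupp
  exact abs_le.2 ⟨by linarith, by linarith⟩

end ProbabilityVector

section Game

variable {N : ℕ} {S : Fin N → Type*}

def offMass (p : ∀ j, S j) (x : ∀ j, S j → ℝ) : ℝ := ∑ i, (1 - x i (p i))

def pureProfile [∀ i, DecidableEq (S i)] (p : ∀ j, S j) : ∀ j, S j → ℝ :=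
  fun i s => if s = p i then 1 else 0

lemma offMass_pureProfile [∀ i, DecidableEq (S i)] (p : ∀ j, S j) :
    offMass p (pureProfile p) = 0 := by
  simp [offMass, pureProfile]

lemma continuous_offMass (p : ∀ j, S j) : Continuous (offMass p) := by
  unfold offMass; fun_prop

lemma insertStrat_restrict (p : ∀ j, S j) (i : Fin N) (s : S i) :
    insertStrat i s (fun j => p j) = Function.update p i s := by
  funext j
  by_cases h : j = i
  · subst h; simp [insertStrat]
  · simp [insertStrat, h]

variable [∀ i, Fintype (S i)] {x : ∀ j, S j → ℝ}

lemma Upure_pureProfile [∀ i, DecidableEq (S i)] (u : (∀ j, S j) → Fin N → ℝ) (p : ∀ j, S j)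
    (i : Fin N) (s : S i) : Upure u (pureProfile p) i s = u (Function.update p i s) i := by
  classical
  have hprod (q : ∀ j : {j // j ≠ i}, S j) :
      ∏ j : {j // j ≠ i}, pureProfile p j (q j) =
        if q = fun j : {j // j ≠ i} => p j then 1 else 0 := by
    simp only [pureProfile, Fintype.prod_boole, funext_iff]
  simp [Upure, hprod, insertStrat_restrict]

lemma continuous_Upure (u : (∀ j, S j) → Fin N → ℝ) (i : Fin N) (s : S i) :
    Continuous fun x => Upure u x i s := by
  unfold Upure; fun_prop

namespace MixedProfile

lemma le_one_s12 (hx : MixedProfile x) (i : Fin N) (s : S i) : x i s ≤ 1 :=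
  hx.2 i ▸ single_le_sum (fun t _ => hx.1 i t) (mem_univ s)

lemma le_one_sub_of_ne [∀ i, DecidableEq (S i)] (hx : MixedProfile x) {i : Fin N} {s t : S i}
    (h : s ≠ t) : x i s ≤ 1 - x i t := by
  rw [← hx.2 i, ← sum_erase_eq_sub (mem_univ t)]
  exact single_le_sum (fun r _ => hx.1 i r) (mem_erase.2 ⟨h, mem_univ s⟩)

lemma dist_pureProfile_le_offMass [∀ i, DecidableEq (S i)] (hx : MixedProfile x)
    (p : ∀ j, S j) : dist x (pureProfile p) ≤ offMass p x := by
  have hg : ∀ i, 0 ≤ 1 - x i (p i) := fun i => sub_nonneg.2 (hx.le_one_s12 i (p i))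
  refine (dist_pi_le_iff (sum_nonneg fun i _ => hg i)).2 fun i =>
    (dist_pi_le_iff (sum_nonneg fun i _ => hg i)).2 fun s =>
      (?_ : _ ≤ 1 - x i (p i)).trans (single_le_sum (fun j _ => hg j) (mem_univ i))
  rw [Real.dist_eq, pureProfile]
  split_ifs with h
  · rw [h, abs_sub_comm, abs_of_nonneg (hg i)]
  · rw [sub_zero, abs_of_nonneg (hx.1 i s)]
    exact hx.le_one_sub_of_ne h

lemma abs_Upure_le {u : (∀ j, S j) → Fin N → ℝ} {M : ℝ} (hx : MixedProfile x)
    (hM : ∀ a i, |u a i| ≤ M) (i : Fin N) (s : S i) : |Upure u x i s| ≤ M := by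
  classical
  have hw : ∑ q : ∀ j : {j // j ≠ i}, S j, ∏ j : {j // j ≠ i}, x j (q j) = 1 := by
    rw [← Fintype.prod_sum]; simp [hx.2]
  calc |Upure u x i s|
      ≤ ∑ q : ∀ j : {j // j ≠ i}, S j, (∏ j : {j // j ≠ i}, x j (q j)) * M := by
        refine (abs_sum_le_sum_abs _ _).trans (sum_le_sum fun q _ => ?_)
        have hq : 0 ≤ ∏ j : {j // j ≠ i}, x j (q j) := prod_nonneg fun j _ => hx.1 j (q j)
        rw [abs_mul, abs_of_nonneg hq]
        exact mul_le_mul_of_nonneg_left (hM _ _) hq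
    _ = M := by rw [← sum_mul, hw, one_mul]

lemma replicator_eq {u : (∀ j, S j) → Fin N → ℝ} (hx : MixedProfile x) (i : Fin N) (t : S i) :
    replicator u x i t = x i t * ∑ s, x i s * (Upure u x i t - Upure u x i s) := by
  simp only [replicator, mul_sub, sum_sub_distrib, ← sum_mul, hx.2 i, one_mul]

lemma abs_replicator_le [∀ i, DecidableEq (S i)] {u : (∀ j, S j) → Fin N → ℝ} {M : ℝ}
    (hx : MixedProfile x) (hM : ∀ a i, |u a i| ≤ M) (i : Fin N) (t : S i) :
    |replicator u x i t| ≤ 2 * M * (1 - x i t) := by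
  have hsum := abs_sum_mul_le (C := 2 * M) (f := fun s => Upure u x i t - Upure u x i s)
    (hx.1 i) (hx.2 i) (sub_self _) fun s =>
    (abs_sub _ _).trans (by linarith [hx.abs_Upure_le hM i t, hx.abs_Upure_le hM i s])
  rw [hx.replicator_eq, abs_mul]
  calc |x i t| * _ ≤ 1 * (2 * M * (1 - x i t)) :=
        mul_le_mul (abs_le.2 ⟨by linarith [hx.1 i t], hx.le_one_s12 i t⟩) hsum (abs_nonneg _)
          zero_le_one
    _ = 2 * M * (1 - x i t) := one_mul _

lemma mul_one_sub_le_replicator [∀ i, DecidableEq (S i)] {u : (∀ j, S j) → Fin N → ℝ} {c : ℝ}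
    (hx : MixedProfile x) (hc : 0 ≤ c) {i : Fin N} {t : S i} (ht : 1 / 2 ≤ x i t)
    (hgap : ∀ s, s ≠ t → c ≤ Upure u x i t - Upure u x i s) :
    c / 2 * (1 - x i t) ≤ replicator u x i t := by
  have hsum := mul_one_sub_le_sum_mul (f := fun s => Upure u x i t - Upure u x i s)
    (hx.1 i) (hx.2 i) (sub_self _) hgap
  have hpos : 0 ≤ c * (1 - x i t) := mul_nonneg hc (sub_nonneg.2 (hx.le_one_s12 i t))
  rw [hx.replicator_eq]
  nlinarith

lemma abs_sum_replicator_le [∀ i, DecidableEq (S i)] {u : (∀ j, S j) → Fin N → ℝ} {M : ℝ}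
    (hx : MixedProfile x) (hM : ∀ a i, |u a i| ≤ M) (p : ∀ j, S j) :
    |∑ i, replicator u x i (p i)| ≤ 2 * M * offMass p x :=
  calc |∑ i, replicator u x i (p i)| ≤ ∑ i, 2 * M * (1 - x i (p i)) :=
        (abs_sum_le_sum_abs _ _).trans (sum_le_sum fun i _ => hx.abs_replicator_le hM i (p i))
    _ = 2 * M * offMass p x := by rw [offMass, mul_sum]

end MixedProfile

lemma exists_mul_offMass_le_sum_replicator [∀ i, DecidableEq (S i)]
    (u : (∀ j, S j) → Fin N → ℝ) (p : ∀ j, S j)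
    (hNE : ∀ (i : Fin N) (s : S i), s ≠ p i → u (Function.update p i s) i < u p i) :
    ∃ c > 0, ∃ η > 0, ∀ x, MixedProfile x → offMass p x ≤ η →
      c * offMass p x ≤ ∑ i, replicator u x i (p i) := by
  have hgap : ∀ i s, s ≠ p i →
      0 < Upure u (pureProfile p) i (p i) - Upure u (pureProfile p) i s := fun i s hs => by
    rw [Upure_pureProfile, Upure_pureProfile, Function.update_eq_self]
    linarith [hNE i s hs]
  obtain ⟨c, hc, hcgap⟩ := (eventually_mem_nhdsWithin (a := (0 : ℝ)) (s := Set.Ioi 0)).and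
    (nhdsWithin_le_nhds <| Filter.eventually_all.2 fun i => Filter.eventually_all.2 fun s =>
      Filter.eventually_imp_distrib_left.2 fun hs => eventually_lt_nhds (hgap i s hs)) |>.exists
  have hnear : ∀ᶠ x in 𝓝 (pureProfile p), ∀ i, 1 / 2 < x i (p i) ∧
      ∀ s, s ≠ p i → c < Upure u x i (p i) - Upure u x i s := by
    refine Filter.eventually_all.2 fun i => Filter.Eventually.and ?_ <|
      Filter.eventually_all.2 fun s => Filter.eventually_imp_distrib_left.2 fun hs => ?_
    · have hcont : Continuous fun x : ∀ j, S j → ℝ => x i (p i) := by fun_prop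
      exact (hcont.tendsto _).eventually_const_lt (by norm_num [pureProfile])
    · have hcont : Continuous fun x => Upure u x i (p i) - Upure u x i s :=
        (continuous_Upure u i (p i)).sub (continuous_Upure u i s)
      exact (hcont.tendsto _).eventually_const_lt (hcgap i s hs)
  obtain ⟨δ, hδ, hball⟩ := Metric.eventually_nhds_iff.1 hnear
  refine ⟨c / 2, half_pos hc, δ / 2, half_pos hδ, fun x hx hxη => ?_⟩
  have hx' := hball ((hx.dist_pureProfile_le_offMass p).trans_lt (by linarith))
  rw [offMass, mul_sum]
  exact sum_le_sum fun i _ => hx.mul_one_sub_le_replicator hc.le (hx' i).1.le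
    fun s hs => ((hx' i).2 s hs).le

end Game

theorem strict_pure_nash_is_attractor_general {N : ℕ} {S : Fin N → Type*}
    [∀ i, Fintype (S i)] [∀ i, DecidableEq (S i)]
    (u : (∀ j, S j) → Fin N → ℝ)
    (p : ∀ j, S j)
    (hNE : ∀ (i : Fin N) (s : S i), s ≠ p i →
      u (Function.update p i s) i < u p i)
    (φ : {x : ∀ j, S j → ℝ // MixedProfile x} → ℝ → {x : ∀ j, S j → ℝ // MixedProfile x})
    (hflow0 : ∀ x, φ x 0 = x)
    (hderiv : ∀ x (t : ℝ) (i : Fin N) (s : S i),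
      HasDerivAt (fun τ => (φ x τ : ∀ j, S j → ℝ) i s)
        (replicator u (φ x t : ∀ j, S j → ℝ) i s) t)
    (e : {x : ∀ j, S j → ℝ // MixedProfile x})
    (he : ∀ (i : Fin N) (s : S i), (e : ∀ j, S j → ℝ) i s = if s = p i then 1 else 0) :
    IsAttractor φ {e} := by
  have he' : (e : ∀ j, S j → ℝ) = pureProfile p := funext fun i => funext (he i)
  obtain ⟨M, hM⟩ : ∃ M, ∀ a i, |u a i| ≤ M := by
    obtain ⟨M, hM⟩ := Finite.bddAbove_range fun ai : (∀ j, S j) × Fin N => |u ai.1 ai.2|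
    exact ⟨M, fun a i => hM ⟨(a, i), rfl⟩⟩
  obtain ⟨c, hc, η, hη, hdecay⟩ := exists_mul_offMass_le_sum_replicator u p hNE
  have hV' : ∀ x t, HasDerivAt (fun τ => offMass p (φ x τ).1)
      (-∑ i, replicator u (φ x t).1 i (p i)) t := fun x t => by
    simpa [offMass] using HasDerivAt.fun_sum (u := univ) fun i _ => (hderiv x t i (p i)).const_sub 1
  exact isAttractor_singleton_of_lyapunov (V := fun x => offMass p x.1) (K := 2 * M)
    ((continuous_offMass p).comp continuous_subtype_val)
    (fun x => by rw [Subtype.dist_eq, he']; exact x.2.dist_pureProfile_le_offMass p)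
    (by rw [he', offMass_pureProfile]) hflow0 hV'
    (fun x => by rw [abs_neg]; exact x.2.abs_sum_replicator_le hM p) hc hη
    (fun x hx => by linarith [hdecay x.1 x.2 hx])

/-- a strict pure Nash equilibrium, viewed as a vertex of the strategy
space, is a singleton attractor of the replicator flow. -/
theorem strict_pure_nash_is_attractor {N : ℕ} {S : Fin N → Type*}
    [∀ i, Fintype (S i)] [∀ i, DecidableEq (S i)]
    (u : (∀ j, S j) → Fin N → ℝ)
    (p : ∀ j, S j)
    (hNE : ∀ (i : Fin N) (s : S i), s ≠ p i →
      u (Function.update p i s) i < u p i)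
    (φ : {x : ∀ j, S j → ℝ // MixedProfile x} → ℝ → {x : ∀ j, S j → ℝ // MixedProfile x})
    (hflow0 : ∀ x, φ x 0 = x)
    (hflowadd : ∀ x s t, φ (φ x s) t = φ x (s + t))
    (hcont : Continuous fun q : {x : ∀ j, S j → ℝ // MixedProfile x} × ℝ => φ q.1 q.2)
    (hderiv : ∀ x (t : ℝ) (i : Fin N) (s : S i),
      HasDerivAt (fun τ => (φ x τ : ∀ j, S j → ℝ) i s)
        (replicator u (φ x t : ∀ j, S j → ℝ) i s) t)
    (e : {x : ∀ j, S j → ℝ // MixedProfile x})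
    (he : ∀ (i : Fin N) (s : S i), (e : ∀ j, S j → ℝ) i s = if s = p i then 1 else 0) :
    IsAttractor φ {e} :=
  strict_pure_nash_is_attractor_general u p hNE φ hflow0 hderiv e he
end
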